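/- arXiv:1606.08827 — 3 statements merged into one kernel-verified Lean document; each statement's English description precedes it below -/
import Mathlib

section
/- If G is a graph with at least two vertices such that no induced subgraph of G is isomorphic to the three-edge path P4, then either G is disconnected or the complement of G is disconnected. -/
/-!
Induct on the number of vertices. Suppose `G` and `Gᶜ` are both connected and pick a vertex `v`.
Since `P₄` is self-complementary and `(G - v)ᶜ = Gᶜ - v`, the induction hypothesis lets us assume,
after possibly swapping `G` and `Gᶜ`, that `G - v` is disconnected. As `Gᶜ` is connected, `v` has a
non-neighbour, so a walk from `v` to it leaves the closed neighbourhood of `v` through an edge `w x`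
with `v ~ w` and `v ≁ x`. A component of `G - v` not containing `w` holds a neighbour `y` of `v`,
and `x w v y` is an induced `P₄`.
-/

open SimpleGraph

namespace SimpleGraph

variable {V : Type*} {G : SimpleGraph V}

/-- `![1, 3, 0, 2]` sends the path `0 - 1 - 2 - 3` to the path `1 - 3 - 0 - 2` of the complement. -/
def pathGraphFourIsoCompl : pathGraph 4 ≃g (pathGraph 4)ᶜ where
  toEquiv := ⟨![1, 3, 0, 2], ![2, 0, 3, 1], by decide, by decide⟩
  map_rel_iff' {a b} := by
    revert a b
    simp only [compl_adj, pathGraph_adj]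
    decide

lemma nonempty_pathGraph_four_embedding_of_compl (f : pathGraph 4 ↪g Gᶜ) :
    Nonempty (pathGraph 4 ↪g G) :=
  ⟨Embedding.complEquiv.symm (f.comp pathGraphFourIsoCompl.symm.toEmbedding)⟩

lemma nonempty_pathGraph_four_embedding_of_adj {a b c d : V} (hab : G.Adj a b) (hbc : G.Adj b c)
    (hcd : G.Adj c d) (hac : ¬ G.Adj a c) (hbd : ¬ G.Adj b d) (had : ¬ G.Adj a d) :
    Nonempty (pathGraph 4 ↪g G) := by
  refine ⟨⟨⟨![a, b, c, d], ?_⟩, ?_⟩⟩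
  · intro i j hij
    fin_cases i <;> fin_cases j <;> simp_all [G.adj_comm]
  · intro i j
    change G.Adj (![a, b, c, d] i) (![a, b, c, d] j) ↔ _
    fin_cases i <;> fin_cases j <;> simp_all [pathGraph_adj, G.adj_comm]

lemma induce_compl (s : Set V) : (G.induce s)ᶜ = Gᶜ.induce s := by
  ext x y
  simp [Subtype.ext_iff]

lemma two_le_card_compl_singleton [Fintype V] [DecidableEq V] {v u u' : V} (hu : G.Adj v u)
    (hu' : Gᶜ.Adj v u') : 2 ≤ Fintype.card ({v}ᶜ : Set V) :=
  Fintype.one_lt_card_iff.2 ⟨⟨u, hu.ne'⟩, ⟨u', hu'.ne'⟩, fun h => hu'.2 (Subtype.mk.inj h ▸ hu)⟩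

lemma Connected.exists_adj_adj_compl_adj (hG : G.Connected) {v u : V} (hu : Gᶜ.Adj v u) :
    ∃ w x, G.Adj v w ∧ G.Adj w x ∧ Gᶜ.Adj v x := by
  obtain ⟨p⟩ := hG v u
  obtain ⟨⟨⟨w, x⟩, hwx⟩, -, hw, hx⟩ := p.exists_boundary_dart {x | x = v ∨ G.Adj v x} (Or.inl rfl)
    (by simpa [compl_adj, eq_comm] using hu)
  simp only [Set.mem_ofPred_eq, not_or] at hw hx
  obtain rfl | hvw := hw
  · exact absurd hwx hx.2
  · exact ⟨w, x, hvw, hwx, (compl_adj G v x).2 ⟨Ne.symm hx.1, hx.2⟩⟩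

lemma Connected.exists_adj_reachable_induce_compl_singleton (hG : G.Connected) {v : V}
    (c : ({v}ᶜ : Set V)) : ∃ y : ({v}ᶜ : Set V), G.Adj v y ∧ (G.induce {v}ᶜ).Reachable y c := by
  obtain ⟨c, hc⟩ := c
  obtain ⟨q, hq⟩ := (hG v c).exists_isPath
  cases q with
  | nil => exact absurd rfl hc
  | cons h q =>
    rw [Walk.cons_isPath_iff] at hq
    exact ⟨_, h, ⟨q.induce {v}ᶜ fun x hx hxv => hq.2 (hxv ▸ hx)⟩⟩

lemma Connected.nonempty_pathGraph_four_embedding (hG : G.Connected) {v u : V}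
    (hu : Gᶜ.Adj v u) (hv : ¬ (G.induce {v}ᶜ).Connected) : Nonempty (pathGraph 4 ↪g G) := by
  obtain ⟨w, x, hvw, hwx, hvx⟩ := hG.exists_adj_adj_compl_adj hu
  set H := G.induce {v}ᶜ
  let w' : ({v}ᶜ : Set V) := ⟨w, hvw.ne'⟩
  let x' : ({v}ᶜ : Set V) := ⟨x, hvx.ne'⟩
  obtain ⟨c, hwc⟩ : ∃ c, ¬ H.Reachable w' c := by
    rw [connected_iff_exists_forall_reachable] at hv
    push Not at hv
    exact hv w'
  obtain ⟨y, hvy, hyc⟩ := hG.exists_adj_reachable_induce_compl_singleton c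
  have hwy : ¬ H.Reachable w' y := fun h => hwc (h.trans hyc)
  have hxy : ¬ H.Reachable x' y := fun h => hwy ((show H.Adj w' x' from hwx).reachable.trans h)
  exact nonempty_pathGraph_four_embedding_of_adj hwx.symm hvw.symm hvy
    (fun h => hvx.2 h.symm) (fun h => hwy (show H.Adj w' y from h).reachable)
    (fun h => hxy (show H.Adj x' y from h).reachable)

end SimpleGraph

/-- Seinsche's theorem: a `P₄`-free graph on at least two vertices is
disconnected or has disconnected complement. -/
theorem p4_free_disconnected_or_complement_disconnected {V : Type*} [Fintype V]
    (G : SimpleGraph V) (hcard : 2 ≤ Fintype.card V)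
    (hfree : IsEmpty (pathGraph 4 ↪g G)) :
    ¬ G.Connected ∨ ¬ Gᶜ.Connected := by
  classical
  induction hn : Fintype.card V using Nat.strong_induction_on generalizing V with
  | _ n ih =>
  by_contra! ⟨hG, hGc⟩
  have : Nontrivial V := Fintype.one_lt_card_iff_nontrivial.1 hcard
  obtain ⟨v⟩ := this.to_nonempty
  obtain ⟨u, hu⟩ := hG.preconnected.exists_adj_of_nontrivial v
  obtain ⟨u', hu'⟩ := hGc.preconnected.exists_adj_of_nontrivial v
  have hlt : Fintype.card ({v}ᶜ : Set V) < n := by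
    rw [Fintype.card_compl_set, Set.card_singleton]
    omega
  have hfree_induce : IsEmpty (pathGraph 4 ↪g G.induce {v}ᶜ) :=
    ⟨fun f => hfree.false ((Embedding.induce _).comp f)⟩
  rcases ih _ hlt (G.induce {v}ᶜ) (two_le_card_compl_singleton hu hu') hfree_induce rfl with hv | hv
  · exact hfree.false (hG.nonempty_pathGraph_four_embedding hu' hv).some
  · rw [induce_compl] at hv
    have hu_compl : Gᶜᶜ.Adj v u := by rwa [compl_compl]
    exact hfree.false (nonempty_pathGraph_four_embedding_of_compl
      (hGc.nonempty_pathGraph_four_embedding hu_compl hv).some).some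
end

section
/- Let T be a triangle-free graph on m vertices with no stable set of size greater than s, and let G be obtained from T by substituting a copy of the complement T^c for every vertex of T. Then G has m^2 vertices and no clique or stable set of size greater than 2s. -/
open SimpleGraph

/-- The graph obtained from `T` by substituting a copy of `Tᶜ` for every vertex of `T`:
`(u,a)` and `(v,b)` are adjacent iff `u = v` and `a,b` are nonadjacent (and distinct)
in `T`, or `u ≠ v` and `u,v` are adjacent in `T`. -/
def substComplAll {V : Type*} (T : SimpleGraph V) : SimpleGraph (V × V) where
  Adj p q := (p.1 = q.1 ∧ p.2 ≠ q.2 ∧ ¬ T.Adj p.2 q.2) ∨ (p.1 ≠ q.1 ∧ T.Adj p.1 q.1)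
  symm := ⟨by
    rintro p q (⟨h1, h2, h3⟩ | ⟨h1, h2⟩)
    · exact Or.inl ⟨h1.symm, h2.symm, fun h => h3 h.symm⟩
    · exact Or.inr ⟨h1.symm, h2.symm⟩⟩
  loopless := ⟨by rintro p (⟨_, h, _⟩ | ⟨h, _⟩) <;> exact h rfl⟩

open Finset

/-!
A clique of `substComplAll T` meets at most two blocks `{u} × V`, since the blocks it meets form a
clique of `T`, and inside each block it is a stable set of `T`, so it has at most `2 * s` vertices.
Dually, a stable set meets the blocks of a stable set of `T` and is a clique of `T` inside each
block, so it has at most `s * 2` vertices.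
-/

theorem SimpleGraph.IsClique.card_lt_of_cliqueFree {V : Type*} {G : SimpleGraph V} {n : ℕ}
    (hG : G.CliqueFree n) {t : Finset V} (ht : G.IsClique (t : Set V)) : #t < n := by
  by_contra! hn
  obtain ⟨u, hut, hu⟩ := exists_subset_card_eq hn
  exact hG u ⟨ht.subset (coe_subset.mpr hut), hu⟩

theorem Finset.card_le_mul_of_card_image_fst_le_of_card_preimage_le {α β : Type*} [DecidableEq α]
    {c : Finset (α × β)} {A B : ℕ} (hA : #(c.image Prod.fst) ≤ A)
    (hB : ∀ u, #(c.preimage (Prod.mk u) (Prod.mk_right_injective u).injOn) ≤ B) :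
    #c ≤ A * B := by
  have hfiber : ∀ u, #{p ∈ c | p.1 = u} ≤ B := fun u => by
    refine (card_le_card_of_injOn Prod.snd ?_ ?_).trans (hB u)
    · rintro ⟨v, b⟩ hp
      obtain ⟨hp, rfl⟩ := mem_filter.mp hp
      simpa using hp
    · exact fun p hp q hq h => Prod.ext ((mem_filter.mp hp).2.trans (mem_filter.mp hq).2.symm) h
  calc #c ≤ B * #(c.image Prod.fst) := card_le_mul_card_image c B fun u _ => hfiber u
    _ ≤ A * B := by rw [mul_comm]; exact Nat.mul_le_mul_right B hA

section substComplAll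

variable {V : Type*} {T : SimpleGraph V} {s : Set (V × V)}

theorem isClique_image_fst_of_isClique_substComplAll (h : (substComplAll T).IsClique s) :
    T.IsClique (Prod.fst '' s) := by
  rintro _ ⟨p, hp, rfl⟩ _ ⟨q, hq, rfl⟩ hpq
  rcases h hp hq (fun h => hpq (congrArg Prod.fst h)) with ⟨h, -⟩ | ⟨-, hadj⟩
  exacts [absurd h hpq, hadj]

theorem isClique_compl_preimage_of_isClique_substComplAll (h : (substComplAll T).IsClique s)
    (u : V) : Tᶜ.IsClique (Prod.mk u ⁻¹' s) := by
  intro a ha b hb hab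
  rcases h ha hb (fun h => hab (congrArg Prod.snd h)) with ⟨-, -, hnadj⟩ | ⟨huu, -⟩
  exacts [⟨hab, hnadj⟩, absurd rfl huu]

theorem isClique_compl_image_fst_of_isClique_compl_substComplAll
    (h : (substComplAll T)ᶜ.IsClique s) : Tᶜ.IsClique (Prod.fst '' s) := by
  rintro _ ⟨p, hp, rfl⟩ _ ⟨q, hq, rfl⟩ hpq
  exact ⟨hpq, fun hadj => (h hp hq (fun h => hpq (congrArg Prod.fst h))).2 (Or.inr ⟨hpq, hadj⟩)⟩

theorem isClique_preimage_of_isClique_compl_substComplAll (h : (substComplAll T)ᶜ.IsClique s)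
    (u : V) : T.IsClique (Prod.mk u ⁻¹' s) := by
  intro a ha b hb hab
  by_contra hnadj
  exact (h ha hb (fun h => hab (congrArg Prod.snd h))).2 (Or.inl ⟨rfl, hab, hnadj⟩)

end substComplAll

theorem subst_compl_no_large_clique_or_stable {V : Type*} [Fintype V]
    (T : SimpleGraph V) (m s : ℕ) (hm : Fintype.card V = m)
    (htriangle : T.CliqueFree 3)
    (hstable : ∀ t : Finset V, Tᶜ.IsClique (↑t : Set V) → t.card ≤ s) :
    Fintype.card (V × V) = m ^ 2 ∧
    ∀ c : Finset (V × V),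
      ((substComplAll T).IsClique (↑c : Set (V × V)) ∨
        (substComplAll T)ᶜ.IsClique (↑c : Set (V × V))) → c.card ≤ 2 * s := by
  classical
  refine ⟨by rw [Fintype.card_prod, hm, sq], fun c hc => ?_⟩
  have hclique : ∀ t : Finset V, T.IsClique (t : Set V) → #t ≤ 2 := fun t ht =>
    Nat.le_of_lt_succ (ht.card_lt_of_cliqueFree htriangle)
  rcases hc with hc | hc
  · refine card_le_mul_of_card_image_fst_le_of_card_preimage_le ?_ fun u => hstable _ ?_
    · exact hclique _ (by simpa using isClique_image_fst_of_isClique_substComplAll hc)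
    · simpa using isClique_compl_preimage_of_isClique_substComplAll hc u
  · rw [mul_comm]
    refine card_le_mul_of_card_image_fst_le_of_card_preimage_le (hstable _ ?_) fun u => hclique _ ?_
    · simpa using isClique_compl_image_fst_of_isClique_compl_substComplAll hc
    · simpa using isClique_preimage_of_isClique_compl_substComplAll hc u
end

section
/- Every tournament T contains a transitive subtournament on at least log2(|V(T)|) vertices. -/
/-- A tournament: a directed graph in which, for every two distinct vertices `u, v`,
exactly one of `uv`, `vu` is an edge. -/
structure Tournament (V : Type*) where
  adj : V → V → Prop
  irrefl : ∀ v, ¬ adj v v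
  total : ∀ u v, u ≠ v → (adj u v ↔ ¬ adj v u)

/-- A tournament is transitive if it has no directed cycles; for tournaments this is
equivalent to the adjacency relation being transitive. -/
def Tournament.IsTransitive {V : Type*} (T : Tournament V) : Prop :=
  ∀ u v w, T.adj u v → T.adj v w → T.adj u w

/-- A set of vertices inducing a transitive subtournament. -/
def Tournament.IsTransSet {V : Type*} (T : Tournament V) (s : Set V) : Prop :=
  ∀ u ∈ s, ∀ v ∈ s, ∀ w ∈ s, T.adj u v → T.adj v w → T.adj u w

/-!
Pick a vertex `v`. The other `n - 1` vertices split into its out-neighbours and its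
in-neighbours, so one part has at least `(n - 1) / 2` of them. A transitive subtournament of that
part stays transitive when `v` is added (as a source or as a sink), so by induction every set of
`n` vertices contains a transitive set of size `k` with `n < 2 ^ k`.
Reversing all edges swaps the two parts, so only the out-neighbour case has to be argued.
-/

namespace Tournament

variable {V : Type*}

def rev (T : Tournament V) : Tournament V where
  adj u v := T.adj v u
  irrefl v := T.irrefl v
  total u v h := T.total v u h.symm

lemma IsTransSet.rev {T : Tournament V} {s : Set V} (h : T.IsTransSet s) : T.rev.IsTransSet s :=
  fun u hu v hv w hw huv hvw => h w hw v hv u hu hvw huv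

lemma IsTransSet.insert_of_forall_adj {T : Tournament V} {s : Set V} {v : V}
    (hs : T.IsTransSet s) (hv : ∀ a ∈ s, T.adj v a) : T.IsTransSet (insert v s) := by
  have hnot_adj : ∀ a ∈ s, ¬ T.adj a v := fun a ha =>
    have hav : a ≠ v := fun h => T.irrefl v (h ▸ hv a ha)
    (T.total a v hav).mp |>.mt (not_not.mpr (hv a ha))
  rintro u (rfl | hu) x (rfl | hx) w (rfl | hw) hux hxw
  all_goals first
    | exact absurd hux (T.irrefl _)
    | exact absurd hxw (T.irrefl _)
    | exact absurd hux (hnot_adj _ ‹_›)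
    | exact absurd hxw (hnot_adj _ ‹_›)
    | exact hv _ ‹_›
    | exact hs u hu x hx w hw hux hxw

open Classical in
lemma card_erase_eq_card_filter_adj_add_card_filter_rev_adj
    (T : Tournament V) (s : Finset V) (v : V) :
    (s.erase v).card =
      ((s.erase v).filter (T.adj v ·)).card + ((s.erase v).filter (T.rev.adj v ·)).card := by
  rw [← Finset.card_filter_add_card_filter_not (p := (T.adj v ·))]
  congr 2
  refine Finset.filter_congr fun a ha => ?_
  exact (T.total a v (Finset.ne_of_mem_erase ha)).symm

lemma exists_isTransSet_subset_card_lt_two_pow (T : Tournament V) (s : Finset V) :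
    ∃ t ⊆ s, T.IsTransSet (↑t : Set V) ∧ s.card < 2 ^ t.card := by
  classical
  induction s using Finset.strongInduction generalizing T with
  | _ s ih =>
  obtain rfl | ⟨v, hv⟩ := s.eq_empty_or_nonempty
  · exact ⟨∅, subset_rfl, by simp [IsTransSet], by simp⟩
  wlog hlarge :
      ((s.erase v).filter (T.rev.adj v ·)).card ≤ ((s.erase v).filter (T.adj v ·)).card
      generalizing T
  · obtain ⟨t, hts, ht, hcard⟩ := this T.rev (le_of_not_ge hlarge)
    exact ⟨t, hts, ht.rev, hcard⟩
  have hsplit := T.card_erase_eq_card_filter_adj_add_card_filter_rev_adj s v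
  set out := (s.erase v).filter (T.adj v ·)
  have hout : out ⊂ s := (Finset.filter_subset _ _).trans_ssubset (Finset.erase_ssubset hv)
  obtain ⟨t, hto, ht, hcard⟩ := ih out hout T
  have hvt : v ∉ t := fun h => Finset.notMem_erase v s (Finset.mem_of_mem_filter v (hto h))
  refine ⟨insert v t, Finset.insert_subset hv (hto.trans hout.subset), ?_, ?_⟩
  · rw [Finset.coe_insert]
    exact ht.insert_of_forall_adj fun a ha => (Finset.mem_filter.mp (hto ha)).2
  · rw [Finset.card_insert_of_notMem hvt, pow_succ]
    have hcard_erase := Finset.card_erase_add_one hv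
    omega

end Tournament

lemma Real.logb_two_natCast_le_of_le_two_pow {n k : ℕ} (h : n ≤ 2 ^ k) :
    Real.logb 2 n ≤ k := by
  obtain rfl | hn := Nat.eq_zero_or_pos n
  · simp
  rw [Real.logb_le_iff_le_rpow one_lt_two (by exact_mod_cast hn), Real.rpow_natCast]
  exact_mod_cast h

theorem tournament_log_transitive {V : Type*} [Fintype V] (T : Tournament V) :
    ∃ s : Finset V, T.IsTransSet (↑s : Set V) ∧
      Real.logb 2 (Fintype.card V) ≤ s.card := by
  obtain ⟨t, -, ht, hcard⟩ := T.exists_isTransSet_subset_card_lt_two_pow Finset.univ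
  exact ⟨t, ht, Real.logb_two_natCast_le_of_le_two_pow hcard.le⟩
end
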